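/- arXiv:2302.04376 — 3 statements merged into one kernel-verified Lean document; each statement's English description precedes it below -/
import Mathlib

section
/- Under the setting of the default action vector identity, suppose $w, w' \in \mathbb{R}^d$ satisfy $|w^\top \phi(\tilde a) - (w')^\top \phi(\tilde a)| \le \bar\eta$ for every $\tilde a$ in the set $\bar{\mathcal{A}} = \{(a^{(i)}, \bar a^{(-i)}) : a^{(i)} \in \mathcal{A}^{(i)}, i \in [m]\}$ (which contains the default vector $\bar a^{(1:m)}$). Then for every $a^{(1:m)} \in \mathcal{A}^{(1)} \times \cdots \times \mathcal{A}^{(m)}$, $|w^\top \phi(a^{(1:m)}) - (w')^\top \phi(a^{(1:m)})| \le (2m-1)\bar\eta$. -/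
open Matrix

/-- DAV accuracy transfer: if two linear predictors agree up to `η` on all joint
actions differing from the default vector `ā` in at most one coordinate, then they
agree up to `(2m-1) η` on every joint action (features being additive). -/
theorem stmt_4 (m d : ℕ) (hm : 1 ≤ m) (A : Fin m → Type*)
    (φi : ∀ i, A i → (Fin d → ℝ))
    (φ : (∀ i, A i) → (Fin d → ℝ))
    (hφ : ∀ a, φ a = ∑ i, φi i (a i))
    (abar : ∀ i, A i) (w w' : Fin d → ℝ) (η : ℝ)
    (h : ∀ (i : Fin m) (b : A i),
      |w ⬝ᵥ φ (Function.update abar i b) - w' ⬝ᵥ φ (Function.update abar i b)| ≤ η) :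
    ∀ a : (∀ i, A i), |w ⬝ᵥ φ a - w' ⬝ᵥ φ a| ≤ (2 * (m : ℝ) - 1) * η := by
  intro a
  set v := w - w' with hv
  have hdp : ∀ x : ∀ i, A i, w ⬝ᵥ φ x - w' ⬝ᵥ φ x = v ⬝ᵥ φ x := by
    intro x; rw [hv, sub_dotProduct]
  -- S i b := v ⬝ᵥ φi i b
  have key : ∀ x : ∀ i, A i, v ⬝ᵥ φ x = ∑ i, v ⬝ᵥ φi i (x i) := by
    intro x
    rw [hφ x]
    simp only [dotProduct, Finset.sum_apply, Finset.mul_sum]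
    exact Finset.sum_comm
  have i0 : Fin m := ⟨0, hm⟩
  have hη : 0 ≤ η := le_trans (abs_nonneg _) (h i0 (abar i0))
  have habar : |v ⬝ᵥ φ abar| ≤ η := by
    have := h i0 (abar i0)
    rwa [hdp, Function.update_eq_self] at this
  have hupd : ∀ (i : Fin m) (b : A i),
      v ⬝ᵥ φ (Function.update abar i b)
        = v ⬝ᵥ φi i b - v ⬝ᵥ φi i (abar i) + v ⬝ᵥ φ abar := by
    intro i b
    rw [key, key]
    rw [← Finset.sum_erase_add _ _ (Finset.mem_univ i),
        ← Finset.sum_erase_add _ _ (Finset.mem_univ i)]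
    have : ∑ j ∈ Finset.univ.erase i, v ⬝ᵥ φi j (Function.update abar i b j)
        = ∑ j ∈ Finset.univ.erase i, v ⬝ᵥ φi j (abar j) := by
      apply Finset.sum_congr rfl
      intro j hj
      rw [Function.update_of_ne (Finset.ne_of_mem_erase hj)]
    rw [this, Function.update_self]
    ring
  -- main identity: v⬝φ a = ∑ i, v⬝φ(update ā i (a i)) - (m-1) * v⬝φ ā
  have main : v ⬝ᵥ φ a
      = (∑ i, v ⬝ᵥ φ (Function.update abar i (a i))) - ((m : ℝ) - 1) * (v ⬝ᵥ φ abar) := by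
    have : ∑ i, v ⬝ᵥ φ (Function.update abar i (a i))
        = (∑ i, v ⬝ᵥ φi i (a i)) - (∑ i, v ⬝ᵥ φi i (abar i)) + (m : ℝ) * (v ⬝ᵥ φ abar) := by
      simp only [hupd]
      rw [Finset.sum_add_distrib, Finset.sum_sub_distrib, Finset.sum_const,
        Finset.card_univ, Fintype.card_fin, nsmul_eq_mul]
    rw [this, key a, ← key abar]
    ring
  rw [hdp, main]
  have hb1 : |∑ i, v ⬝ᵥ φ (Function.update abar i (a i))| ≤ (m : ℝ) * η := by
    calc |∑ i, v ⬝ᵥ φ (Function.update abar i (a i))|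
        ≤ ∑ i, |v ⬝ᵥ φ (Function.update abar i (a i))| := Finset.abs_sum_le_sum_abs _ _
      _ ≤ ∑ _i : Fin m, η := by
          apply Finset.sum_le_sum
          intro i _
          have := h i (a i)
          rwa [hdp] at this
      _ = (m : ℝ) * η := by simp [mul_comm]
  have hm1 : (0:ℝ) ≤ (m : ℝ) - 1 := by
    have : (1:ℝ) ≤ (m:ℝ) := by exact_mod_cast hm
    linarith
  calc |(∑ i, v ⬝ᵥ φ (Function.update abar i (a i))) - ((m : ℝ) - 1) * (v ⬝ᵥ φ abar)|
      ≤ |∑ i, v ⬝ᵥ φ (Function.update abar i (a i))| + |((m : ℝ) - 1) * (v ⬝ᵥ φ abar)| :=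
        abs_sub _ _
    _ ≤ (m : ℝ) * η + ((m : ℝ) - 1) * η := by
        apply add_le_add hb1
        rw [abs_mul, abs_of_nonneg hm1]
        exact mul_le_mul_of_nonneg_left habar hm1
    _ = (2 * (m : ℝ) - 1) * η := by ring
end

section
/- Let $\phi_1, \phi_2, \dots$ be a sequence of vectors in $\mathbb{R}^d$ with $\|\phi_t\|_2 \le 1$, and let $V_t = \lambda I + \sum_{s \le t} \phi_s \phi_s^\top$ with $\lambda > 0$. Suppose each vector satisfies $\phi_t^\top V_{t-1}^{-1} \phi_t > \tau$ for some $\tau > 0$. Then the number of vectors in the sequence is at most $\frac{e}{e-1} \cdot \frac{1+\tau}{\tau} \cdot d \left( \log\left(1 + \frac{1}{\tau}\right) + \log\left(1 + \frac{1}{\lambda}\right) \right)$. -/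
open Matrix Finset

section AuxLemmas

variable {d : ℕ}

lemma my_trace_eq_sum_eigenvalues (A : Matrix (Fin d) (Fin d) ℝ) (hA : A.IsHermitian) :
    A.trace = ∑ i, hA.eigenvalues i := by
  exact (hA.trace_eq_sum_eigenvalues).trans (by simp)

lemma my_posSemidef_vecMulVec (x : Fin d → ℝ) : (vecMulVec x x).PosSemidef := by
  rw [Matrix.vecMulVec_eq Unit]
  have h : (replicateRow Unit x)ᴴ = replicateCol Unit x := by simp [Matrix.conjTranspose]; rfl
  rw [← h]
  exact Matrix.posSemidef_conjTranspose_mul_self _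

lemma my_posDef_add_posSemidef {A B : Matrix (Fin d) (Fin d) ℝ} (hA : A.PosDef)
    (hB : B.PosSemidef) : (A + B).PosDef := by
  refine ⟨hA.1.add hB.1, fun x hx => ?_⟩
  simpa [mul_add,add_mul] using add_pos_of_pos_of_nonneg (hA.2 (x := x) hx) (hB.2 x)

lemma my_det_le (A : Matrix (Fin d) (Fin d) ℝ) (hd : 0 < d) (hA : A.PosSemidef) :
    A.det ≤ (A.trace / d) ^ d := by
  have hH := hA.1
  have hev : ∀ i, 0 ≤ hH.eigenvalues i := hA.eigenvalues_nonneg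
  have hdet : A.det = ∏ i, hH.eigenvalues i := by
    rw [hH.det_eq_prod_eigenvalues]; norm_num
  have htr : A.trace = ∑ i, hH.eigenvalues i := my_trace_eq_sum_eigenvalues A hH
  rw [hdet, htr]
  have hgm := Real.geom_mean_le_arith_mean_weighted Finset.univ (fun _ => (d : ℝ)⁻¹)
    hH.eigenvalues (fun i _ => by positivity) (by simp [Finset.card_univ]; field_simp)
    (fun i _ => hev i)
  have hprod : ∏ i, hH.eigenvalues i ^ ((d : ℝ)⁻¹) = (∏ i, hH.eigenvalues i) ^ ((d : ℝ)⁻¹) :=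
    Real.finset_prod_rpow _ _ (fun i _ => hev i) _
  rw [hprod] at hgm
  have h2 : ((∏ i, hH.eigenvalues i) ^ ((d : ℝ)⁻¹)) ^ d = ∏ i, hH.eigenvalues i := by
    rw [← Real.rpow_natCast ((∏ i, hH.eigenvalues i) ^ ((d : ℝ)⁻¹)) d]
    rw [Real.rpow_natCast]
    exact Real.rpow_inv_natCast_pow (Finset.prod_nonneg fun i _ => hev i) hd.ne'
  calc ∏ i, hH.eigenvalues i = ((∏ i, hH.eigenvalues i) ^ ((d : ℝ)⁻¹)) ^ d := h2.symm
    _ ≤ (∑ i, (d : ℝ)⁻¹ * hH.eigenvalues i) ^ d := by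
        apply pow_le_pow_left₀ (Real.rpow_nonneg (Finset.prod_nonneg fun i _ => hev i) _) hgm
    _ = ((∑ i, hH.eigenvalues i) / d) ^ d := by
        rw [← Finset.mul_sum]; ring_nf

noncomputable def gram (d n : ℕ) (lam : ℝ) (φ : Fin n → Fin d → ℝ) (k : ℕ) :
    Matrix (Fin d) (Fin d) ℝ :=
  lam • 1 + ∑ s ∈ Finset.univ.filter (fun s : Fin n => (s : ℕ) < k), vecMulVec (φ s) (φ s)

lemma gram_zero (n : ℕ) (lam : ℝ) (φ : Fin n → Fin d → ℝ) :
    gram d n lam φ 0 = lam • 1 := by simp [_root_.gram]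

lemma gram_succ (n : ℕ) (lam : ℝ) (φ : Fin n → Fin d → ℝ) {k : ℕ} (hk : k < n) :
    gram d n lam φ (k + 1) = gram d n lam φ k + vecMulVec (φ ⟨k, hk⟩) (φ ⟨k, hk⟩) := by
  unfold _root_.gram
  rw [add_assoc]
  congr 1
  have hset : Finset.univ.filter (fun s : Fin n => (s : ℕ) < k + 1) =
      insert ⟨k, hk⟩ (Finset.univ.filter (fun s : Fin n => (s : ℕ) < k)) := by
    ext s
    simp [Nat.lt_succ_iff_lt_or_eq, Fin.ext_iff]
    omega
  rw [hset, Finset.sum_insert (by simp), add_comm]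

lemma gram_posDef (n : ℕ) {lam : ℝ} (hlam : 0 < lam) (φ : Fin n → Fin d → ℝ) (k : ℕ) :
    (gram d n lam φ k).PosDef := by
  apply my_posDef_add_posSemidef
  · have h : (lam • (1 : Matrix (Fin d) (Fin d) ℝ)) = Matrix.diagonal (fun _ => lam) := by
      rw [Matrix.smul_one_eq_diagonal]
    rw [h]
    exact Matrix.PosDef.diagonal (fun _ => hlam)
  · exact Finset.sum_induction _ _ (fun a b ha hb => ha.add hb) Matrix.PosSemidef.zero
      (fun s _ => my_posSemidef_vecMulVec (φ s))

lemma gram_det_succ (n : ℕ) {lam : ℝ} (hlam : 0 < lam) (φ : Fin n → Fin d → ℝ)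
    {k : ℕ} (hk : k < n) :
    (gram d n lam φ (k + 1)).det = (gram d n lam φ k).det *
      (1 + φ ⟨k, hk⟩ ⬝ᵥ ((gram d n lam φ k)⁻¹ *ᵥ φ ⟨k, hk⟩)) := by
  rw [gram_succ n lam φ hk, Matrix.vecMulVec_eq Unit,
    Matrix.det_add_replicateCol_mul_replicateRow (gram_posDef n hlam φ k).det_pos.ne'.isUnit]
  congr 1
  rw [Matrix.det_unique]
  simp only [Matrix.add_apply, Matrix.one_apply_eq, Matrix.mul_apply, Matrix.replicateRow_apply,
    Matrix.replicateCol_apply, dotProduct, Matrix.mulVec, Finset.sum_mul, Finset.mul_sum]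
  congr 1
  rw [Finset.sum_comm]
  apply Finset.sum_congr rfl
  intro x _
  apply Finset.sum_congr rfl
  intro i _
  ring

lemma numeric_step (d n : ℕ) (hd : 0 < d) {lam τ : ℝ} (hlam : 0 < lam) (hτ : 0 < τ)
    (h : (n : ℝ) * Real.log (1 + τ) ≤ d * Real.log (1 + n / (d * lam))) :
    (n : ℝ) ≤ (Real.exp 1 / (Real.exp 1 - 1)) * ((1 + τ) / τ) * d *
      (Real.log (1 + 1 / τ) + Real.log (1 + 1 / lam)) := by
  set E := Real.exp 1 with hE
  have hE1 : 1 < E := by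
    have := Real.add_one_le_exp 1; rw [hE]; linarith
  have h1τ : (0:ℝ) < 1 + τ := by linarith
  set c : ℝ := τ / (1 + τ) with hc
  have hc0 : 0 < c := div_pos hτ h1τ
  have hclog : c ≤ Real.log (1 + τ) := by
    have h3 := Real.log_le_sub_one_of_pos (show (0:ℝ) < (1+τ)⁻¹ by positivity)
    rw [Real.log_inv] at h3
    have h2 : (1+τ)⁻¹ - 1 = -c := by rw [hc]; field_simp; ring
    rw [h2] at h3
    linarith
  have hd0 : (0:ℝ) < d := by exact_mod_cast hd
  set m : ℝ := n * c / d with hm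
  have hm0 : 0 ≤ m := by positivity
  have hmlog : m ≤ Real.log (1 + n / (d * lam)) := by
    rw [hm, div_le_iff₀ hd0]
    calc (n:ℝ) * c ≤ n * Real.log (1 + τ) := by
          exact mul_le_mul_of_nonneg_left hclog (Nat.cast_nonneg n)
      _ ≤ d * Real.log (1 + n / (d * lam)) := h
      _ = Real.log (1 + n / (d * lam)) * d := by ring
  have hnd : (n : ℝ) / d = m / c := by
    rw [hm]; field_simp
  have hτ' : (0:ℝ) < 1 + 1/τ := by positivity
  have hsub : (1:ℝ) + n / (d * lam) ≤ (1 + 1/τ) * (1 + 1/lam) * max 1 m := by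
    have h1 : (n:ℝ) / (d * lam) = m / c / lam := by
      rw [div_mul_eq_div_div, hnd]
    have hinvc : 1 / c = 1 + 1/τ := by rw [hc]; field_simp; ring
    have hmle : m ≤ max 1 m := le_max_right 1 m
    have h1le : (1:ℝ) ≤ max 1 m := le_max_left 1 m
    rw [h1]
    have hmc : m / c ≤ (1 + 1/τ) * max 1 m := by
      rw [div_eq_mul_one_div, hinvc]
      calc m * (1 + 1/τ) ≤ max 1 m * (1 + 1/τ) :=
            mul_le_mul_of_nonneg_right hmle (le_of_lt hτ')
        _ = (1 + 1/τ) * max 1 m := by ring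
    have key : (1:ℝ) ≤ (1 + 1/τ) * max 1 m := by
      nlinarith [one_div_pos.mpr hτ]
    have hdiv : m / c / lam ≤ ((1 + 1/τ) * max 1 m) / lam := by gcongr
    have heq : (1 + 1/τ) * max 1 m + ((1 + 1/τ) * max 1 m) / lam
        = (1 + 1/τ) * (1 + 1/lam) * max 1 m := by
      field_simp
    linarith
  have hlogsub : m ≤ Real.log (1 + 1/τ) + Real.log (1 + 1/lam) + Real.log (max 1 m) := by
    calc m ≤ Real.log (1 + n / (d * lam)) := hmlog
      _ ≤ Real.log ((1 + 1/τ) * (1 + 1/lam) * max 1 m) :=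
          Real.log_le_log (by positivity) hsub
      _ = Real.log (1 + 1/τ) + Real.log (1 + 1/lam) + Real.log (max 1 m) := by
          rw [Real.log_mul (by positivity) (by positivity),
            Real.log_mul (by positivity) (by positivity)]
  have hE0 : (0:ℝ) < E := by linarith
  have hlogmax : Real.log (max 1 m) ≤ m / E := by
    rcases le_total m 1 with hm1 | hm1
    · rw [max_eq_left hm1, Real.log_one]
      positivity
    · rw [max_eq_right hm1]
      have h4 := Real.log_le_sub_one_of_pos (show 0 < m / E by positivity)
      rw [Real.log_div (by linarith : m ≠ 0) (by linarith : E ≠ 0), hE, Real.log_exp] at h4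
      linarith
  set L := Real.log (1 + 1/τ) + Real.log (1 + 1/lam) with hL
  have hL0 : 0 ≤ L := by
    rw [hL]
    have := Real.log_nonneg (show (1:ℝ) ≤ 1 + 1/τ by nlinarith [one_div_pos.mpr hτ])
    have := Real.log_nonneg (show (1:ℝ) ≤ 1 + 1/lam by nlinarith [one_div_pos.mpr hlam])
    linarith
  clear_value E c m L
  have hmL : m ≤ E / (E - 1) * L := by
    have hstep : m ≤ L + m / E := by linarith
    have h2 : 0 < E - 1 := by linarith
    have h8 : m * E ≤ (L + m / E) * E := mul_le_mul_of_nonneg_right hstep hE0.le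
    have h9 : (L + m / E) * E = L * E + m := by
      rw [add_mul, div_mul_cancel₀ m hE0.ne']
    rw [h9] at h8
    have h6 : m * (E - 1) ≤ L * E := by linarith
    rw [div_mul_eq_mul_div, le_div_iff₀ h2]
    linarith
  have hfin : (n:ℝ) * c ≤ E / (E - 1) * L * d := by
    have h5 : m * d ≤ (E / (E - 1) * L) * d :=
      mul_le_mul_of_nonneg_right hmL (le_of_lt hd0)
    rw [hm, div_mul_cancel₀ _ hd0.ne'] at h5
    linarith
  have hgoal : (n:ℝ) ≤ (E / (E - 1) * L * d) / c := (le_div_iff₀ hc0).mpr hfin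
  calc (n:ℝ) ≤ (E / (E - 1) * L * d) / c := hgoal
    _ = E / (E - 1) * ((1 + τ) / τ) * d * L := by
        rw [hc, div_div_eq_mul_div]
        ring

end AuxLemmas

/-- Core set size bound (elliptical potential): any sequence of unit-norm-bounded
vectors, each of which is `τ`-uncertain w.r.t. the regularized Gram matrix of its
predecessors, has length at most
`(e/(e-1)) ((1+τ)/τ) d (log(1+1/τ) + log(1+1/λ))`. -/
theorem stmt_6 (d n : ℕ) (lam τ : ℝ) (hlam : 0 < lam) (hτ : 0 < τ)
    (φ : Fin n → Fin d → ℝ) (hφ : ∀ t, ∑ i, φ t i ^ 2 ≤ 1)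
    (V : Fin n → Matrix (Fin d) (Fin d) ℝ)
    (hV : ∀ t, V t = lam • (1 : Matrix (Fin d) (Fin d) ℝ) +
      ∑ s ∈ Finset.univ.filter (fun s => s < t), vecMulVec (φ s) (φ s))
    (huncertain : ∀ t, τ < φ t ⬝ᵥ ((V t)⁻¹ *ᵥ φ t)) :
    (n : ℝ) ≤ (Real.exp 1 / (Real.exp 1 - 1)) * ((1 + τ) / τ) * d *
      (Real.log (1 + 1 / τ) + Real.log (1 + 1 / lam)) := by
  -- trivial case n = 0
  rcases Nat.eq_zero_or_pos n with hn | hn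
  · subst hn
    have hE1 : (1:ℝ) < Real.exp 1 := by
      have := Real.add_one_le_exp 1; linarith
    have hL1 : 0 ≤ Real.log (1 + 1/τ) := Real.log_nonneg (by nlinarith [one_div_pos.mpr hτ])
    have hL2 : 0 ≤ Real.log (1 + 1/lam) := Real.log_nonneg (by nlinarith [one_div_pos.mpr hlam])
    simp only [Nat.cast_zero]
    have h1 : (0:ℝ) ≤ Real.exp 1 / (Real.exp 1 - 1) :=
      div_nonneg (Real.exp_pos 1).le (by linarith)
    have h2 : (0:ℝ) ≤ (1 + τ) / τ := by positivity
    have h3 : (0:ℝ) ≤ (d:ℝ) := Nat.cast_nonneg d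
    exact mul_nonneg (mul_nonneg (mul_nonneg h1 h2) h3) (by linarith)
  -- trivial case d = 0
  rcases Nat.eq_zero_or_pos d with hd | hd
  · exfalso
    subst hd
    have := huncertain ⟨0, hn⟩
    have hz : φ ⟨0, hn⟩ ⬝ᵥ ((V ⟨0, hn⟩)⁻¹ *ᵥ φ ⟨0, hn⟩) = 0 := by
      simp [dotProduct]
    rw [hz] at this
    linarith
  -- main case
  have hVg : ∀ t : Fin n, V t = gram d n lam φ (t : ℕ) := by
    intro t
    rw [hV t]
    unfold _root_.gram
    congr 1
  -- determinant lower bound by induction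
  have hdetlow : ∀ k, k ≤ n → lam ^ d * (1 + τ) ^ k ≤ (gram d n lam φ k).det := by
    intro k
    induction k with
    | zero =>
      intro _
      rw [_root_.gram_zero, pow_zero, mul_one, Matrix.det_smul, Matrix.det_one, mul_one]
      simp
    | succ k ih =>
      intro hk1
      have hk : k < n := Nat.lt_of_succ_le hk1
      have ihk := ih (le_of_lt hk)
      rw [gram_det_succ n hlam φ hk]
      have hunc := huncertain ⟨k, hk⟩
      rw [hVg ⟨k, hk⟩] at hunc
      have hdetpos : 0 < (gram d n lam φ k).det := (gram_posDef n hlam φ k).det_pos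
      have h1 : (1:ℝ) + τ ≤ 1 + φ ⟨k, hk⟩ ⬝ᵥ ((gram d n lam φ k)⁻¹ *ᵥ φ ⟨k, hk⟩) := by
        simpa using le_of_lt hunc
      calc lam ^ d * (1 + τ) ^ (k + 1) = (lam ^ d * (1 + τ) ^ k) * (1 + τ) := by ring
        _ ≤ (gram d n lam φ k).det * (1 + φ ⟨k, hk⟩ ⬝ᵥ ((gram d n lam φ k)⁻¹ *ᵥ φ ⟨k, hk⟩)) := by
            apply mul_le_mul ihk h1 (by linarith) (le_of_lt hdetpos)
  -- trace upper bound
  have htr : (gram d n lam φ n).trace ≤ lam * d + n := by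
    unfold _root_.gram
    rw [Matrix.trace_add, Matrix.trace_smul, Matrix.trace_one, Matrix.trace_sum]
    have hfilt : Finset.univ.filter (fun s : Fin n => (s : ℕ) < n) = Finset.univ := by
      apply Finset.filter_true_of_mem
      intro s _
      exact s.isLt
    rw [hfilt]
    have htv : ∀ s : Fin n, (vecMulVec (φ s) (φ s)).trace ≤ 1 := by
      intro s
      have : (vecMulVec (φ s) (φ s)).trace = ∑ i, φ s i ^ 2 := by
        simp [Matrix.trace, Matrix.diag, Matrix.vecMulVec_apply, sq]
      rw [this]
      exact hφ s
    have hsum : ∑ s : Fin n, (vecMulVec (φ s) (φ s)).trace ≤ (n : ℝ) := by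
      calc ∑ s : Fin n, (vecMulVec (φ s) (φ s)).trace ≤ ∑ _s : Fin n, (1:ℝ) :=
            Finset.sum_le_sum (fun s _ => htv s)
        _ = n := by simp
    have : lam • (Fintype.card (Fin d) : ℝ) = lam * d := by
      simp [smul_eq_mul]
    rw [this]
    linarith
  -- trace nonneg
  have htrnn : 0 ≤ (gram d n lam φ n).trace := by
    have hpsd := (gram_posDef n hlam φ n).posSemidef
    rw [my_trace_eq_sum_eigenvalues _ hpsd.1]
    exact Finset.sum_nonneg (fun i _ => hpsd.eigenvalues_nonneg i)
  -- determinant upper bound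
  have hdetup : (gram d n lam φ n).det ≤ ((lam * d + n) / d) ^ d := by
    calc (gram d n lam φ n).det ≤ ((gram d n lam φ n).trace / d) ^ d :=
          my_det_le _ hd (gram_posDef n hlam φ n).posSemidef
      _ ≤ ((lam * d + n) / d) ^ d := by
          apply pow_le_pow_left₀ (by positivity)
          gcongr
  -- combine and take logarithms
  have hd0 : (0:ℝ) < d := by exact_mod_cast hd
  have hkey : lam ^ d * (1 + τ) ^ n ≤ ((lam * d + n) / d) ^ d :=
    le_trans (hdetlow n le_rfl) hdetup
  have hlogkey := Real.log_le_log (by positivity) hkey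
  have hsplit : (lam * d + n) / d = lam * (1 + n / (d * lam)) := by
    field_simp
  rw [Real.log_mul (by positivity) (by positivity), Real.log_pow, Real.log_pow, hsplit,
    Real.log_pow, Real.log_mul hlam.ne' (by positivity)] at hlogkey
  have hfinal : (n:ℝ) * Real.log (1 + τ) ≤ d * Real.log (1 + n / (d * lam)) := by
    nlinarith [hlogkey]
  exact numeric_step d n hd hlam hτ hfinal
end

section
/- Let $\phi_1,\dots,\phi_t \in \mathbb{R}^d$ with $\|\phi_s\|_2 \le 1$ and $\Phi \in \mathbb{R}^{t \times d}$ the matrix with rows $\phi_s^\top$. If each $\phi_s$ satisfies $\phi_s^\top (\lambda I + \sum_{u < s} \phi_u \phi_u^\top)^{-1} \phi_s > \tau$, then $t \cdot \log(1+\tau) \le \log\det(I_t + \lambda^{-1} \Phi \Phi^\top)$. -/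
open Matrix

lemma aux_posSemidef_vecMulVec {d : ℕ} (v : Fin d → ℝ) :
    (vecMulVec v v).PosSemidef := by
  rw [Matrix.posSemidef_iff_dotProduct_mulVec]
  constructor
  · ext i j
    simp [vecMulVec_apply, Matrix.IsHermitian, conjTranspose_apply, mul_comm]
  · intro x
    have h : star x ⬝ᵥ (vecMulVec v v *ᵥ x) = (v ⬝ᵥ x) * (v ⬝ᵥ x) := by
      simp only [dotProduct, mulVec, vecMulVec_apply, star_trivial, Finset.mul_sum,
        Finset.sum_mul]
      rw [Finset.sum_comm]
      apply Finset.sum_congr rfl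
      intro i _
      apply Finset.sum_congr rfl
      intro j _
      ring
    rw [h]
    exact mul_self_nonneg _

lemma aux_posDef_smul_one {d : ℕ} {lam : ℝ} (hlam : 0 < lam) :
    (lam • (1 : Matrix (Fin d) (Fin d) ℝ)).PosDef := by
  rw [Matrix.smul_one_eq_diagonal]
  exact Matrix.posDef_diagonal_iff.mpr fun _ => hlam

/-- Uncertain sequence length vs. information gain:
`t log(1+τ) ≤ log det(I_t + λ⁻¹ Φ Φᵀ)`. -/
theorem stmt_7 (d t : ℕ) (lam τ : ℝ) (hlam : 0 < lam) (hτ : 0 < τ)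
    (φ : Fin t → Fin d → ℝ) (hφ : ∀ s, ∑ i, φ s i ^ 2 ≤ 1)
    (Φ : Matrix (Fin t) (Fin d) ℝ) (hΦ : ∀ s i, Φ s i = φ s i)
    (huncertain : ∀ s : Fin t,
      τ < φ s ⬝ᵥ ((lam • (1 : Matrix (Fin d) (Fin d) ℝ) +
        ∑ u ∈ Finset.univ.filter (fun u => u < s), vecMulVec (φ u) (φ u))⁻¹ *ᵥ φ s)) :
    (t : ℝ) * Real.log (1 + τ) ≤
      Real.log ((1 + lam⁻¹ • (Φ * Φᵀ)).det) := by
  classical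
  -- the sequence of regularized Gram matrices
  set M : ℕ → Matrix (Fin d) (Fin d) ℝ := fun n =>
    lam • (1 : Matrix (Fin d) (Fin d) ℝ) +
      ∑ u ∈ Finset.univ.filter (fun u : Fin t => (u : ℕ) < n), vecMulVec (φ u) (φ u)
    with hM
  -- each M n is positive definite
  have hMpos : ∀ n, (M n).PosDef := by
    intro n
    refine (aux_posDef_smul_one hlam).add_posSemidef ?_
    refine Finset.sum_induction _ _ (fun a b ha hb => ha.add hb)
      Matrix.PosSemidef.zero ?_
    intro u _
    exact aux_posSemidef_vecMulVec (φ u)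
  -- the matrices in the hypothesis agree with M
  have hMeq : ∀ s : Fin t,
      lam • (1 : Matrix (Fin d) (Fin d) ℝ) +
        ∑ u ∈ Finset.univ.filter (fun u => u < s), vecMulVec (φ u) (φ u) = M (s : ℕ) := by
    intro s
    rw [hM]
    congr 1
  -- recursion step for the determinant
  have hstep : ∀ s : Fin t,
      (M ((s : ℕ) + 1)).det = (M (s : ℕ)).det * (1 + φ s ⬝ᵥ ((M (s : ℕ))⁻¹ *ᵥ φ s)) := by
    intro s
    have hins : (Finset.univ.filter (fun u : Fin t => (u : ℕ) < (s : ℕ) + 1)) =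
        insert s (Finset.univ.filter (fun u : Fin t => (u : ℕ) < (s : ℕ))) := by
      ext u
      simp only [Finset.mem_filter, Finset.mem_univ, true_and, Finset.mem_insert]
      constructor
      · intro h
        rcases Nat.lt_succ_iff_lt_or_eq.mp h with h | h
        · exact Or.inr h
        · exact Or.inl (Fin.ext h)
      · rintro (rfl | h)
        · exact Nat.lt_succ_self _
        · exact Nat.lt_succ_of_lt h
    have hnotmem : s ∉ Finset.univ.filter (fun u : Fin t => (u : ℕ) < (s : ℕ)) := by
      simp
    have hMsplit : M ((s : ℕ) + 1) = M (s : ℕ) + vecMulVec (φ s) (φ s) := by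
      rw [hM]
      simp only
      rw [hins, Finset.sum_insert hnotmem]
      abel
    have hvmv : vecMulVec (φ s) (φ s) = replicateCol Unit (φ s) * replicateRow Unit (φ s) := by
      ext i j
      simp [vecMulVec_apply, mul_apply]
    have hUnit : IsUnit (M (s : ℕ)).det := (hMpos (s : ℕ)).det_pos.ne'.isUnit
    rw [hMsplit, hvmv, Matrix.det_add_replicateCol_mul_replicateRow hUnit]
    congr 1
    rw [Matrix.det_unique]
    simp only [Matrix.add_apply, Matrix.one_apply_eq, Matrix.mul_apply, Matrix.replicateRow_apply,
      Matrix.replicateCol_apply, dotProduct, mulVec, Finset.univ_unique, dotProduct]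
    congr 1
    simp only [Finset.sum_mul, Finset.mul_sum]
    rw [Finset.sum_comm]
    apply Finset.sum_congr rfl
    intro i _
    apply Finset.sum_congr rfl
    intro j _
    ring
  -- lower bound on the quadratic forms
  have hquad : ∀ s : Fin t, τ < φ s ⬝ᵥ ((M (s : ℕ))⁻¹ *ᵥ φ s) := by
    intro s
    have := huncertain s
    rwa [hMeq s] at this
  -- induction: lam^d * (1+τ)^n ≤ det (M n) for n ≤ t
  have hind : ∀ n, n ≤ t → lam ^ d * (1 + τ) ^ n ≤ (M n).det := by
    intro n
    induction n with
    | zero =>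
      intro _
      have hM0 : M 0 = lam • (1 : Matrix (Fin d) (Fin d) ℝ) := by
        rw [hM]
        simp
      rw [hM0, Matrix.det_smul, Matrix.det_one]
      simp
    | succ n ih =>
      intro hn
      have hnt : n < t := hn
      set s : Fin t := ⟨n, hnt⟩ with hs
      have hrec := hstep s
      have hsv : (s : ℕ) = n := rfl
      rw [hsv] at hrec
      rw [hrec]
      have h1 : lam ^ d * (1 + τ) ^ n ≤ (M n).det := ih hnt.le
      have h2 : 1 + τ ≤ 1 + φ s ⬝ᵥ ((M n)⁻¹ *ᵥ φ s) := by
        have := hquad s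
        rw [hsv] at this
        linarith
      calc lam ^ d * (1 + τ) ^ (n + 1)
          = (lam ^ d * (1 + τ) ^ n) * (1 + τ) := by ring
        _ ≤ (M n).det * (1 + φ s ⬝ᵥ ((M n)⁻¹ *ᵥ φ s)) := by
            apply mul_le_mul h1 h2 (by linarith) (hMpos n).det_pos.le
  -- M t = lam • 1 + Φᵀ * Φ
  have hMt : M t = lam • (1 : Matrix (Fin d) (Fin d) ℝ) + Φᵀ * Φ := by
    simp only [hM]
    congr 1
    rw [Finset.filter_true_of_mem (fun u _ => u.isLt)]
    ext i j
    simp [Matrix.sum_apply, vecMulVec_apply, mul_apply, transpose_apply, hΦ]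
  -- det (M t) = lam^d * det (1 + lam⁻¹ • (Φ * Φᵀ))
  have hdetMt : (M t).det = lam ^ d * (1 + lam⁻¹ • (Φ * Φᵀ)).det := by
    have h1 : M t = lam • ((1 : Matrix (Fin d) (Fin d) ℝ) + lam⁻¹ • (Φᵀ * Φ)) := by
      rw [hMt, smul_add, smul_smul, mul_inv_cancel₀ hlam.ne', one_smul]
    rw [h1, Matrix.det_smul, Fintype.card_fin]
    congr 1
    have h2 : (1 : Matrix (Fin d) (Fin d) ℝ) + lam⁻¹ • (Φᵀ * Φ) =
        1 + (lam⁻¹ • Φᵀ) * Φ := by rw [Matrix.smul_mul]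
    rw [h2, Matrix.det_one_add_mul_comm, Matrix.mul_smul]
  -- conclude
  have hfinal := hind t le_rfl
  rw [hdetMt] at hfinal
  have hD : (1 + τ) ^ t ≤ (1 + lam⁻¹ • (Φ * Φᵀ)).det :=
    le_of_mul_le_mul_left hfinal (pow_pos hlam d)
  have hpow : (0 : ℝ) < (1 + τ) ^ t := pow_pos (by linarith) t
  calc (t : ℝ) * Real.log (1 + τ) = Real.log ((1 + τ) ^ t) := (Real.log_pow (n := t) (x := 1 + τ)).symm
    _ ≤ _ := Real.log_le_log hpow hD
end
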